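/- Under m·f(R)=1 with u(x)=(1+m)(K^{(R)}(x,E)−1) and ν(A)=(m/(1+m))∫K^{(R)}(y,A)γ(dy), one has ∫u(x)ν(dx) = m·R·f'(R), where f'(R)=∑_{n≥1}n·dₙ·R^{n-1} (possibly infinite, in which case both sides are infinite). -/

import Mathlib

set_option maxHeartbeats 1000000

open MeasureTheory ENNReal

lemma tsum_shift_aux (g : ℕ → ℝ≥0∞) (j : ℕ) :
    ∑' n : ℕ, g (j + n) = ∑' k : ℕ, if j ≤ k then g k else 0 := by
  have hinj : Function.Injective (fun n : ℕ => j + n) := add_right_injective j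
  have := hinj.tsum_eq (f := fun k => if j ≤ k then g k else 0)
    (by
      intro k hk
      rcases le_or_gt j k with h | h
      · exact ⟨k - j, by simp; omega⟩
      · simp [Function.support] at hk
        exact absurd hk.1 (by omega))
  rw [← this]
  refine tsum_congr fun n => ?_
  simp

lemma tsum_double_aux (g : ℕ → ℝ≥0∞) :
    ∑' j : ℕ, ∑' n : ℕ, g (j + n) = ∑' k : ℕ, ((k : ℝ≥0∞) + 1) * g k := by
  have h1 : ∀ j, ∑' n : ℕ, g (j + n) = ∑' k : ℕ, if j ≤ k then g k else 0 :=
    tsum_shift_aux g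
  simp_rw [h1]
  rw [ENNReal.tsum_comm]
  refine tsum_congr fun k => ?_
  have : ∑' j : ℕ, (if j ≤ k then g k else 0)
      = ∑ j ∈ Finset.range (k + 1), (if j ≤ k then g k else 0) :=
    tsum_eq_sum (fun j hj => if_neg (by simp at hj; omega))
  rw [this]
  have : ∀ j ∈ Finset.range (k + 1), (if j ≤ k then g k else 0) = g k := by
    intro j hj; simp at hj; simp [hj]
  rw [Finset.sum_congr rfl this, Finset.sum_const, Finset.card_range, nsmul_eq_mul]
  push_cast
  ring

theorem stmt_13 {E : Type*} [MeasurableSpace E] (K : E → Measure E) (γ : Measure E)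
    [IsProbabilityMeasure γ] (hsub : ∀ x, K x Set.univ ≤ 1)
    (m : ℝ≥0∞) (hm0 : 0 < m) (hmtop : m ≠ ⊤)
    (Mpow Kpow : ℕ → E → Measure E)
    (hM0 : ∀ x, Mpow 0 x = Measure.dirac x)
    (hK0 : ∀ x, Kpow 0 x = Measure.dirac x)
    (hMmeas : ∀ n (A : Set E), MeasurableSet A → Measurable fun x => Mpow n x A)
    (hKmeas : ∀ n (A : Set E), MeasurableSet A → Measurable fun x => Kpow n x A)
    (hMrec : ∀ (n : ℕ) (x : E) (A : Set E), MeasurableSet A →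
        Mpow (n + 1) x A = ∫⁻ y, Mpow n y A ∂(K x + (m * K x Set.univ) • γ))
    (hKrec : ∀ (n : ℕ) (x : E) (A : Set E), MeasurableSet A →
        Kpow (n + 1) x A = ∫⁻ y, Kpow n y A ∂(K x))
    (f : ℝ≥0∞ → ℝ≥0∞)
    (hf : ∀ s, f s = ∑' n : ℕ, s ^ (n + 1) * ∫⁻ x, Kpow (n + 1) x Set.univ ∂γ)
    (Ms Ks : ℝ≥0∞ → E → Set E → ℝ≥0∞)
    (hMs : ∀ s x A, Ms s x A = ∑' n : ℕ, s ^ n * Mpow n x A)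
    (hKs : ∀ s x A, Ks s x A = ∑' n : ℕ, s ^ n * Kpow n x A)
    (R : ℝ≥0∞) (hR0 : 0 < R) (hRtop : R ≠ ⊤) (hRf : m * f R = 1)
    (u : E → ℝ≥0∞) (hu : ∀ x, u x = (1 + m) * (Ks R x Set.univ - 1))
    (hae : ∀ᵐ x ∂γ, Ks R x Set.univ ≠ ⊤)
    (d : ℕ → ℝ≥0∞) (hd : ∀ n, d n = ∫⁻ x, Kpow n x Set.univ ∂γ) :
    (m / (1 + m)) * ∫⁻ y, (∫⁻ x, u x ∂(Measure.sum fun n : ℕ => R ^ n • Kpow n y)) ∂γ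
      = m * R * ∑' n : ℕ, ((n : ℝ≥0∞) + 1) * d (n + 1) * R ^ n := by
  have h1m : (1 : ℝ≥0∞) + m ≠ ⊤ := by simp [hmtop]
  have h1m0 : (1 : ℝ≥0∞) + m ≠ 0 := by simp
  have hmK : ∀ n, Measurable (Kpow n) := fun n =>
    Measure.measurable_of_measurable_coe _ fun A hA => hKmeas n A hA
  have hbind : ∀ n x, Kpow (n + 1) x = (K x).bind (Kpow n) := by
    intro n x
    ext A hA
    rw [hKrec n x A hA, Measure.bind_apply hA (hmK n).aemeasurable]
  have hsemi : ∀ (b a : ℕ) (y : E), Kpow (a + b) y = (Kpow b y).bind (Kpow a) := by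
    intro b
    induction b with
    | zero => intro a y; simp [hK0, Measure.dirac_bind (hmK a)]
    | succ b ih =>
        intro a y
        have hab : a + (b + 1) = (a + b) + 1 := by ring
        rw [hab, hbind, hbind, Measure.bind_bind (hmK b).aemeasurable (hmK a).aemeasurable]
        congr 1
        funext x
        exact (ih a x).symm ▸ rfl
  have hkey : ∀ (a b : ℕ) (y : E),
      ∫⁻ x, Kpow a x Set.univ ∂(Kpow b y) = Kpow (a + b) y Set.univ := by
    intro a b y
    rw [hsemi b a y, Measure.bind_apply MeasurableSet.univ (hmK a).aemeasurable]
  -- rewrite u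
  have hT : ∀ x, u x = (1 + m) * ∑' n : ℕ, R ^ (n + 1) * Kpow (n + 1) x Set.univ := by
    intro x
    rw [hu, hKs]
    congr 1
    rw [tsum_eq_zero_add' ENNReal.summable]
    simp only [pow_zero, one_mul, hK0]
    rw [show (Measure.dirac x) Set.univ = 1 from measure_univ]
    exact ENNReal.add_sub_cancel_left one_ne_top
  -- inner integral
  have hinner : ∀ y, ∫⁻ x, u x ∂(Measure.sum fun n : ℕ => R ^ n • Kpow n y)
      = (1 + m) * ∑' j : ℕ, ∑' n : ℕ, R ^ j * (R ^ (n + 1) * Kpow (n + 1 + j) y Set.univ) := by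
    intro y
    simp_rw [hT]
    rw [lintegral_const_mul' _ _ h1m]
    congr 1
    rw [lintegral_sum_measure]
    refine tsum_congr fun j => ?_
    rw [lintegral_smul_measure, ENNReal.tsum_mul_left]
    congr 1
    rw [lintegral_tsum (f := fun (n : ℕ) x => R ^ (n + 1) * Kpow (n + 1) x Set.univ)
      fun n => (((hKmeas (n + 1) Set.univ MeasurableSet.univ).const_mul _)).aemeasurable]
    refine tsum_congr fun n => ?_
    rw [lintegral_const_mul' _ _ (ENNReal.pow_ne_top hRtop), hkey]
  simp_rw [hinner]
  rw [lintegral_const_mul' _ _ h1m, ← mul_assoc,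
    ENNReal.div_mul_cancel h1m0 h1m]
  -- outer integral
  have houter : ∫⁻ y, (∑' j : ℕ, ∑' n : ℕ,
        R ^ j * (R ^ (n + 1) * Kpow (n + 1 + j) y Set.univ)) ∂γ
      = ∑' j : ℕ, ∑' n : ℕ, R ^ j * (R ^ (n + 1) * d (n + 1 + j)) := by
    rw [lintegral_tsum (f := fun (j : ℕ) y => ∑' n : ℕ,
        R ^ j * (R ^ (n + 1) * Kpow (n + 1 + j) y Set.univ))
      fun j => (Measurable.ennreal_tsum fun n =>
        ((hKmeas (n + 1 + j) Set.univ MeasurableSet.univ).const_mul _).const_mul _).aemeasurable]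
    refine tsum_congr fun j => ?_
    rw [lintegral_tsum (f := fun (n : ℕ) y =>
        R ^ j * (R ^ (n + 1) * Kpow (n + 1 + j) y Set.univ))
      fun n =>
      (((hKmeas (n + 1 + j) Set.univ MeasurableSet.univ).const_mul _).const_mul _).aemeasurable]
    refine tsum_congr fun n => ?_
    rw [hd, lintegral_const_mul' _ _ (ENNReal.pow_ne_top hRtop),
      lintegral_const_mul' _ _ (ENNReal.pow_ne_top hRtop)]
  rw [houter]
  have hterm : ∀ j n : ℕ, R ^ j * (R ^ (n + 1) * d (n + 1 + j))
      = (fun k : ℕ => R ^ (k + 1) * d (k + 1)) (j + n) := by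
    intro j n
    simp only []
    rw [show n + 1 + j = j + n + 1 from by omega]
    ring
  simp_rw [hterm]
  rw [tsum_double_aux (fun k : ℕ => R ^ (k + 1) * d (k + 1)), mul_assoc]
  congr 1
  rw [← ENNReal.tsum_mul_left]
  refine tsum_congr fun k => ?_
  ring
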